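/- arXiv:1803.10989 — 12 statements merged into one kernel-verified Lean document; each statement's English description precedes it below -/
import Mathlib

section
/- The best match graph G(T,σ) is connected if and only if there exists a child v of the root ρ of T such that the set of colors appearing among the leaves of the subtree T(v) is a proper subset of S. -/
/-- Arc relation of the best match graph of a leaf-colored tree.
The tree is represented by its ancestor order: a sup-semilattice `V` (lca = sup,
`x ≤ y` meaning `y` is an ancestor of `x`), `ι : L → V` embeds the leaves, and
`σ : L → S` colors the leaves.  `bmArc ι σ x y` holds iff `y` is a best match of `x`. -/
def bmArc {V L S : Type} [SemilatticeSup V] (ι : L → V) (σ : L → S) (x y : L) : Prop :=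
  σ x ≠ σ y ∧ ∀ y' : L, σ y' = σ y → ι x ⊔ ι y ≤ ι x ⊔ ι y'

/-- Out-neighborhood of a vertex in a digraph given as a relation. -/
def outN {L : Type} (G : L → L → Prop) (x : L) : Set L := {y | G x y}

/-- In-neighborhood of a vertex. -/
def inN {L : Type} (G : L → L → Prop) (x : L) : Set L := {y | G y x}

/-- Thinness class of a vertex: all vertices with identical in- and out-neighborhoods. -/
def thinClass {L : Type} (G : L → L → Prop) (x : L) : Set L :=
  {y | outN G y = outN G x ∧ inN G y = inN G x}

/-- Out-neighborhood of a set of vertices. -/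
def setN {L : Type} (G : L → L → Prop) (A : Set L) : Set L := {y | ∃ a ∈ A, G a y}

/-- In-neighborhood of a set of vertices. -/
def setNin {L : Type} (G : L → L → Prop) (A : Set L) : Set L := {y | ∃ a ∈ A, G y a}

/-- Reachable set `R(A) = N(A) ∪ N(N(A)) ∪ ⋯`. -/
def reachSet {L : Type} (G : L → L → Prop) (A : Set L) : Set L :=
  ⋃ n : ℕ, (setN G)^[n + 1] A

/-- The underlying undirected (simple) graph of a best match graph. -/
def bmGraph {V L S : Type} [SemilatticeSup V] (ι : L → V) (σ : L → S) : SimpleGraph L where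
  Adj x y := bmArc ι σ x y ∨ bmArc ι σ y x
  symm := ⟨fun _ _ h => h.symm⟩
  loopless := ⟨fun _ h => by rcases h with h | h <;> exact h.1 rfl⟩

/-- The underlying undirected (simple) graph of an abstract digraph. -/
def relGraph {L : Type} (G : L → L → Prop) : SimpleGraph L where
  Adj x y := x ≠ y ∧ (G x y ∨ G y x)
  symm := ⟨fun _ _ h => ⟨h.1.symm, h.2.symm⟩⟩
  loopless := ⟨fun _ h => h.1 rfl⟩

lemma exists_coatom_above {V : Type} [SemilatticeSup V] [OrderTop V] [Fintype V]
    {v : V} (hne : v ≠ ⊤) : ∃ m, v ≤ m ∧ m ⋖ ⊤ := by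
  classical
  obtain ⟨m, hm, hmax⟩ : ∃ m ∈ Finset.univ.filter (fun w => v ≤ w ∧ w ≠ ⊤),
      ∀ x ∈ Finset.univ.filter (fun w => v ≤ w ∧ w ≠ ⊤), ¬ m < x := by
    obtain ⟨m, hm⟩ := Finset.exists_maximal
      (s := Finset.univ.filter (fun w => v ≤ w ∧ w ≠ ⊤)) ⟨v, by simp [hne]⟩
    exact ⟨m, hm.1, fun x hx hlt => hlt.not_ge (hm.2 hx hlt.le)⟩
  simp only [Finset.mem_filter, Finset.mem_univ, true_and] at hm hmax
  refine ⟨m, hm.1, ⟨lt_of_le_of_ne le_top hm.2, fun u hmu hut => ?_⟩⟩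
  exact hmax u ⟨hm.1.trans hmu.le, ne_of_lt hut⟩ hmu

lemma coatom_unique {V : Type} [SemilatticeSup V] [OrderTop V]
    (hchain : ∀ v a b : V, v ≤ a → v ≤ b → a ≤ b ∨ b ≤ a)
    {z v w : V} (hv : v ⋖ ⊤) (hw : w ⋖ ⊤) (h1 : z ≤ v) (h2 : z ≤ w) : v = w := by
  rcases hchain z v w h1 h2 with h | h
  · rcases eq_or_lt_of_le h with h | h
    · exact h
    · exact absurd hw.1 (hv.2 h)
  · rcases eq_or_lt_of_le h with h | h
    · exact h.symm
    · exact absurd hv.1 (hw.2 h)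

lemma exists_best {V L S : Type} [SemilatticeSup V] [Fintype L]
    (ι : L → V) (σ : L → S)
    (hchain : ∀ v a b : V, v ≤ a → v ≤ b → a ≤ b ∨ b ≤ a)
    (z : L) (c : S) (hne : ∃ y : L, σ y = c) :
    ∃ y₀ : L, σ y₀ = c ∧ ∀ y' : L, σ y' = c → ι z ⊔ ι y₀ ≤ ι z ⊔ ι y' := by
  classical
  obtain ⟨y, hy⟩ := hne
  obtain ⟨m, hm, hmin⟩ : ∃ m ∈ (Finset.univ.filter (fun y => σ y = c)).image (fun y => ι z ⊔ ι y),
      ∀ x ∈ (Finset.univ.filter (fun y => σ y = c)).image (fun y => ι z ⊔ ι y), ¬ x < m := by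
    obtain ⟨m, hm⟩ := Finset.exists_minimal
      (s := (Finset.univ.filter (fun y => σ y = c)).image (fun y => ι z ⊔ ι y))
      ⟨ι z ⊔ ι y, Finset.mem_image.2 ⟨y, by simp [hy], rfl⟩⟩
    exact ⟨m, hm.1, fun x hx hlt => hlt.not_ge (hm.2 hx hlt.le)⟩
  obtain ⟨y₀, hy₀, rfl⟩ := Finset.mem_image.1 hm
  simp only [Finset.mem_filter, Finset.mem_univ, true_and] at hy₀
  refine ⟨y₀, hy₀, fun y' hy' => ?_⟩
  rcases hchain (ι z) (ι z ⊔ ι y₀) (ι z ⊔ ι y') le_sup_left le_sup_left with h | h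
  · exact h
  · rcases eq_or_lt_of_le h with h | h
    · exact h.ge
    · exact absurd h (hmin _ (Finset.mem_image.2 ⟨y', by simp [hy'], rfl⟩))

theorem stmt3 {V L S : Type} [SemilatticeSup V] [OrderTop V] [Fintype V] [Fintype L]
    [Nontrivial S] (ι : L → V) (σ : L → S)
    (hchain : ∀ v a b : V, v ≤ a → v ≤ b → a ≤ b ∨ b ≤ a)
    (hanti : ∀ x y : L, ι x ≤ ι y → x = y)
    (hsupp : ∀ v : V, ∃ x : L, ι x ≤ v)
    (hphylo : ∀ v : V, v ∉ Set.range ι → ∃ a b : V, a ⋖ v ∧ b ⋖ v ∧ a ≠ b)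
    (hsurj : Function.Surjective σ) :
    (bmGraph ι σ).Connected ↔
      ∃ v : V, v ⋖ ⊤ ∧ {c : S | ∃ x : L, ι x ≤ v ∧ σ x = c} ≠ Set.univ := by
  classical
  -- top is not a leaf
  have htopnl : ⊤ ∉ Set.range ι := by
    rintro ⟨x₀, hx₀⟩
    obtain ⟨c₁, c₂, hcc⟩ := exists_pair_ne S
    obtain ⟨x₁, hx₁⟩ := hsurj c₁
    obtain ⟨x₂, hx₂⟩ := hsurj c₂
    have e1 : x₁ = x₀ := hanti _ _ (hx₀ ▸ le_top)
    have e2 : x₂ = x₀ := hanti _ _ (hx₀ ▸ le_top)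
    exact hcc (by rw [← hx₁, ← hx₂, e1, e2])
  constructor
  · -- connected → exists child with proper color set
    intro hconn
    by_contra hno
    push_neg at hno
    have hfull : ∀ v : V, v ⋖ ⊤ → ∀ c : S, ∃ y : L, ι y ≤ v ∧ σ y = c := by
      intro v hv c
      have hc : c ∈ {c : S | ∃ x : L, ι x ≤ v ∧ σ x = c} := (hno v hv).symm ▸ Set.mem_univ c
      exact hc
    -- arcs stay inside the subtree of a child
    have harc : ∀ x y : L, ∀ v : V, v ⋖ ⊤ → ι x ≤ v → bmArc ι σ x y → ι y ≤ v := by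
      intro x y v hv hxv hxy
      by_contra hny
      have hcomp := hchain (ι x) v (ι x ⊔ ι y) hxv le_sup_left
      rcases hcomp with h | h
      · rcases eq_or_lt_of_le h with h | h
        · exact hny (le_sup_right.trans h.ge)
        · have hst : ι x ⊔ ι y = ⊤ := by
            by_contra hne
            exact hv.2 h (lt_of_le_of_ne le_top hne)
          obtain ⟨y', hy'v, hy'c⟩ := hfull v hv (σ y)
          have := hxy.2 y' hy'c
          rw [hst] at this
          have : (⊤ : V) ≤ v := this.trans (sup_le hxv hy'v)
          exact hv.1.ne (top_le_iff.1 this)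
      · exact hny (le_sup_right.trans h)
    -- adjacency preserves the child of the root
    have hadj : ∀ x y : L, ∀ v w : V, v ⋖ ⊤ → w ⋖ ⊤ → ι x ≤ v → ι y ≤ w →
        (bmGraph ι σ).Adj x y → v = w := by
      intro x y v w hv hw hxv hyw hxy
      rcases (show bmArc ι σ x y ∨ bmArc ι σ y x from hxy) with h | h
      · exact coatom_unique hchain hv hw (harc x y v hv hxv h) hyw
      · exact coatom_unique hchain hv hw hxv (harc y x w hw hyw h)
    -- walks preserve the child of the root
    have hwalk : ∀ x y : L, (bmGraph ι σ).Walk x y → ∀ v w : V, v ⋖ ⊤ → w ⋖ ⊤ →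
        ι x ≤ v → ι y ≤ w → v = w := by
      intro x y W
      induction W with
      | nil => intro v w hv hw hxv hyw; exact coatom_unique hchain hv hw hxv hyw
      | @cons a b d hab W ih =>
        intro v w hv hw hxv hyw
        have hbne : ι b ≠ ⊤ := fun h => htopnl ⟨b, h⟩
        obtain ⟨u, hbu, hu⟩ := exists_coatom_above hbne
        exact (hadj a b v u hv hu hxv hbu hab).trans (ih u w hu hw hbu hyw)
    -- root has two distinct children, each with a leaf: contradiction
    obtain ⟨a, b, ha, hb, hab⟩ := hphylo ⊤ htopnl
    obtain ⟨xa, hxa⟩ := hsupp a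
    obtain ⟨xb, hxb⟩ := hsupp b
    obtain ⟨W⟩ := hconn.preconnected xa xb
    exact hab (hwalk xa xb W a b ha hb hxa hxb)
  · -- exists child with proper color set → connected
    rintro ⟨v, hv, hprop⟩
    obtain ⟨c, hc⟩ := (Set.ne_univ_iff_exists_notMem _).1 hprop
    simp only [Set.mem_setOf_eq, not_exists, not_and] at hc
    obtain ⟨x₀, hx₀v⟩ := hsupp v
    have hx₀c : σ x₀ ≠ c := hc x₀ hx₀v
    -- every leaf of color c has lca ⊤ with any leaf under v
    have htop : ∀ x z : L, ι x ≤ v → σ z = c → ι x ⊔ ι z = ⊤ := by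
      intro x z hxv hz
      have hnz : ¬ ι z ≤ v := fun h => hc z h hz
      rcases hchain (ι x) v (ι x ⊔ ι z) hxv le_sup_left with h | h
      · rcases eq_or_lt_of_le h with h | h
        · exact absurd (le_sup_right.trans h.ge) hnz
        · by_contra hne
          exact hv.2 h (lt_of_le_of_ne le_top hne)
      · exact absurd (le_sup_right.trans h) hnz
    -- x₀ is adjacent to every leaf of color c
    have hadj1 : ∀ z : L, σ z = c → (bmGraph ι σ).Adj x₀ z := by
      intro z hz
      refine Or.inl ⟨fun h => hx₀c (h.trans hz), fun y' hy' => ?_⟩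
      rw [htop x₀ z hx₀v hz, htop x₀ y' hx₀v (hy'.trans hz)]
    -- every leaf is reachable from x₀
    have hreach : ∀ z : L, (bmGraph ι σ).Reachable x₀ z := by
      intro z
      by_cases hz : σ z = c
      · exact (hadj1 z hz).reachable
      · obtain ⟨y₀, hy₀c, hbest⟩ := exists_best ι σ hchain z c (hsurj c)
        have harc : (bmGraph ι σ).Adj z y₀ :=
          Or.inl ⟨fun h => hz (h.trans hy₀c), fun y' hy' => hbest y' (hy'.trans hy₀c)⟩
        exact ((hadj1 y₀ hy₀c).reachable).trans harc.symm.reachable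
    have : Nonempty L := ⟨x₀⟩
    exact ⟨fun u w => (hreach u).symm.trans (hreach w)⟩
end

section
/- If the best match graph G(T,σ) is not connected, then for every connected component C of G(T,σ) there is a child v of the root of T with V(C) ⊆ L(T(v)). -/
theorem stmt4 {V L S : Type} [SemilatticeSup V] [OrderTop V] [Fintype V] [Fintype L]
    [Nontrivial S] (ι : L → V) (σ : L → S)
    (hchain : ∀ v a b : V, v ≤ a → v ≤ b → a ≤ b ∨ b ≤ a)
    (hanti : ∀ x y : L, ι x ≤ ι y → x = y)
    (hsupp : ∀ v : V, ∃ x : L, ι x ≤ v)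
    (hphylo : ∀ v : V, v ∉ Set.range ι → ∃ a b : V, a ⋖ v ∧ b ⋖ v ∧ a ≠ b)
    (hsurj : Function.Surjective σ)
    (hdisc : ¬ (bmGraph ι σ).Connected) :
    ∀ x : L, ∃ v : V, v ⋖ ⊤ ∧ ∀ y : L, (bmGraph ι σ).Reachable x y → ι y ≤ v := by
 -- proof
  classical
  -- Key lemma: no arc has lca equal to the root, otherwise the graph is connected.
  have key : ∀ x y : L, bmArc ι σ x y → ι x ⊔ ι y ≠ ⊤ := by
    intro x y hxy htop
    apply hdisc
    have : Nonempty L := ⟨x⟩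
    refine ⟨?_⟩
    have hx_all : ∀ a : L, (bmGraph ι σ).Reachable x a := by
      intro a
      by_cases ha : σ a = σ y
      · -- direct arc x → a
        have harc : bmArc ι σ x a := by
          refine ⟨ha ▸ hxy.1, ?_⟩
          intro y' hy'
          have h1 : ι x ⊔ ι a = ⊤ := top_le_iff.mp (htop ▸ hxy.2 a ha)
          have h2 := hxy.2 y' (hy'.trans ha)
          rw [htop] at h2
          rw [h1]; exact h2
        exact SimpleGraph.Adj.reachable (Or.inl harc)
      · -- find a best match of a among leaves of color σ y
        have hyF : y ∈ Finset.univ.filter (fun z : L => σ z = σ y) := by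
          simp
        obtain ⟨m, hmmem, hmmin⟩ : ∃ m ∈ (Finset.univ.filter (fun z : L => σ z = σ y)).image
            (fun z => ι a ⊔ ι z), ∀ w ∈ (Finset.univ.filter (fun z : L => σ z = σ y)).image
            (fun z => ι a ⊔ ι z), ¬ w < m := by
          obtain ⟨m, hm⟩ := Finset.exists_minimal (s := (Finset.univ.filter (fun z : L => σ z = σ y)).image
            (fun z => ι a ⊔ ι z)) ⟨ι a ⊔ ι y, Finset.mem_image_of_mem _ hyF⟩
          exact ⟨m, hm.1, fun w hw => hm.not_lt hw⟩
        obtain ⟨z₀, hz₀mem, hz₀⟩ := Finset.mem_image.mp hmmem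
        have hz₀c : σ z₀ = σ y := (Finset.mem_filter.mp hz₀mem).2
        have harc : bmArc ι σ a z₀ := by
          refine ⟨fun h => ha (h.trans hz₀c), ?_⟩
          intro y' hy'
          have hy'F : ι a ⊔ ι y' ∈
              ((Finset.univ.filter (fun z : L => σ z = σ y)).image (fun z => ι a ⊔ ι z)) := by
            exact Finset.mem_image_of_mem _ (by simp [hy'.trans hz₀c])
          have hcmp := hchain (ι a) (ι a ⊔ ι z₀) (ι a ⊔ ι y') le_sup_left le_sup_left
          rcases hcmp with h | h
          · exact h
          · rcases eq_or_lt_of_le h with h' | h'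
            · exact le_of_eq h'.symm
            · exact absurd (hz₀ ▸ h') (hmmin _ hy'F)
        -- x → z₀ is an arc (since lca(x, any color-σy leaf) is ⊤)
        have harc2 : bmArc ι σ x z₀ := by
          refine ⟨hz₀c ▸ hxy.1, ?_⟩
          intro y' hy'
          have h1 : ι x ⊔ ι z₀ = ⊤ := top_le_iff.mp (htop ▸ hxy.2 z₀ hz₀c)
          have h2 := hxy.2 y' (hy'.trans hz₀c)
          rw [htop] at h2
          rw [h1]; exact h2
        exact (SimpleGraph.Adj.reachable (Or.inl harc2)).trans
          (SimpleGraph.Adj.reachable (Or.inr harc))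
    intro a b
    exact (hx_all a).symm.trans (hx_all b)
  intro x
  -- ι x ≠ ⊤
  have hxt : ι x ≠ ⊤ := by
    intro h
    obtain ⟨s, hs⟩ := exists_ne (σ x)
    obtain ⟨y, hy⟩ := hsurj s
    have : y = x := hanti y x (h ▸ le_top)
    exact hs ((this ▸ hy).symm)
  -- the set of strict ancestors of x (below ⊤)
  set A : Finset V := Finset.univ.filter (fun a : V => ι x ≤ a ∧ a ≠ ⊤) with hA
  have hxA : ι x ∈ A := by simp [hA, hxt]
  obtain ⟨v, hvA, hvmax⟩ : ∃ v ∈ A, ∀ w ∈ A, ¬ v < w := by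
    obtain ⟨v, hv⟩ := Finset.exists_maximal (s := A) ⟨ι x, hxA⟩
    exact ⟨v, hv.1, fun w hw => hv.not_gt hw⟩
  have hvle : ι x ≤ v := (Finset.mem_filter.mp hvA).2.1
  have hvne : v ≠ ⊤ := (Finset.mem_filter.mp hvA).2.2
  have hgreat : ∀ a ∈ A, a ≤ v := by
    intro a haA
    have hale : ι x ≤ a := (Finset.mem_filter.mp haA).2.1
    rcases hchain (ι x) a v hale hvle with h | h
    · exact h
    · rcases eq_or_lt_of_le h with h' | h'
      · exact le_of_eq h'.symm
      · exact absurd h' (hvmax _ haA)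
  refine ⟨v, ?_, ?_⟩
  · constructor
    · exact lt_of_le_of_ne le_top hvne
    · intro c hvc hct
      have hcA : c ∈ A := by
        refine Finset.mem_filter.mpr ⟨Finset.mem_univ _, hvle.trans hvc.le, hct.ne⟩
      exact absurd (hgreat c hcA) (not_le_of_gt hvc)
  · -- reachability stays below v
    have step : ∀ a b : L, (bmGraph ι σ).Walk a b → ι a ≤ v → ι b ≤ v := by
      intro a b p
      induction p with
      | nil => exact id
      | @cons a c b h p ih =>
        intro hav
        apply ih
        have hsup : ι a ⊔ ι c ≠ ⊤ := by
          rcases h with h | h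
          · exact key a c h
          · rw [sup_comm]; exact key c a h
        rcases hchain (ι a) v (ι a ⊔ ι c) hav le_sup_left with h' | h'
        · have : ι a ⊔ ι c ∈ A := by
            refine Finset.mem_filter.mpr ⟨Finset.mem_univ _, (hvle.trans h'), hsup⟩
          exact le_sup_right.trans (hgreat _ this)
        · exact le_sup_right.trans h'
    intro y hr
    obtain ⟨p⟩ := hr
    exact step x y p hvle
end

section
/- Let (G_i,σ_i), 1≤i≤k, be vertex-disjoint colored best match graphs with vertex sets L_i and color sets S_i = σ_i(L_i). Then the disjoint union of the (G_i,σ_i) is a colored best match graph if and only if all the color sets S_i coincide. -/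
/-- A witness that the colored digraph `(G, σ)` is a colored best match graph:
a finite rooted tree (given by its ancestor order) with leaf set `L` explaining it. -/
structure BMGWitness {L S : Type} (G : L → L → Prop) (σ : L → S) where
  V : Type
  [sup : SemilatticeSup V]
  [top : OrderTop V]
  [fin : Fintype V]
  ι : L → V
  anti : ∀ x y : L, ι x ≤ ι y → x = y
  supp : ∀ v : V, ∃ x : L, ι x ≤ v
  chain : ∀ v a b : V, v ≤ a → v ≤ b → a ≤ b ∨ b ≤ a
  spec : ∀ x y : L, G x y ↔ bmArc ι σ x y

/-- `(G, σ)` is a colored best match graph. -/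
def IsBMG {L S : Type} (G : L → L → Prop) (σ : L → S) : Prop :=
  Nonempty (BMGWitness G σ)

/-! ### Auxiliary: gluing witness trees under a common root -/

section Glue

variable {k : ℕ} {W : Fin k → Type} [∀ i, SemilatticeSup (W i)]

/-- Join in the tree obtained by gluing the trees `W i` under a common root `⊤`. -/
def glueSup (a b : WithTop (Σ i, W i)) : WithTop (Σ i, W i) :=
  WithTop.recTopCoe ⊤
    (fun x => WithTop.recTopCoe ⊤
      (fun y => if h : x.1 = y.1 then ((⟨y.1, h ▸ x.2 ⊔ y.2⟩ : Σ i, W i) : WithTop (Σ i, W i))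
        else ⊤) b) a

@[simp] lemma glueSup_top (b : WithTop (Σ i, W i)) : glueSup ⊤ b = ⊤ := rfl

@[simp] lemma glueSup_top' (a : WithTop (Σ i, W i)) : glueSup a ⊤ = ⊤ := by
  induction a using WithTop.recTopCoe <;> rfl

@[simp] lemma glueSup_same (i : Fin k) (a b : W i) :
    glueSup (W := W) (↑(⟨i, a⟩ : Σ i, W i)) (↑(⟨i, b⟩ : Σ i, W i)) = ↑(⟨i, a ⊔ b⟩ : Σ i, W i) := by
  simp [glueSup]

@[simp] lemma glueSup_ne {i j : Fin k} (h : i ≠ j) (a : W i) (b : W j) :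
    glueSup (W := W) (↑(⟨i, a⟩ : Σ i, W i)) (↑(⟨j, b⟩ : Σ i, W i)) = ⊤ := by
  simp [glueSup, h]

/-- The glued tree is a sup-semilattice. -/
def glueSemi : SemilatticeSup (WithTop (Σ i, W i)) :=
  { (inferInstance : PartialOrder (WithTop (Σ i, W i))) with
    sup := glueSup
    le_sup_left := by
      intro a b
      induction a using WithTop.recTopCoe with
      | top => simp
      | coe x =>
        induction b using WithTop.recTopCoe with
        | top => simp
        | coe y =>
          obtain ⟨i, xv⟩ := x; obtain ⟨j, yv⟩ := y
          rcases eq_or_ne i j with rfl | h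
          · rw [glueSup_same]
            exact WithTop.coe_le_coe.2 (Sigma.mk_le_mk_iff.2 le_sup_left)
          · rw [glueSup_ne h]; exact le_top
    le_sup_right := by
      intro a b
      induction a using WithTop.recTopCoe with
      | top => simp
      | coe x =>
        induction b using WithTop.recTopCoe with
        | top => simp
        | coe y =>
          obtain ⟨i, xv⟩ := x; obtain ⟨j, yv⟩ := y
          rcases eq_or_ne i j with rfl | h
          · rw [glueSup_same]
            exact WithTop.coe_le_coe.2 (Sigma.mk_le_mk_iff.2 le_sup_right)
          · rw [glueSup_ne h]; exact le_top
    sup_le := by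
      intro a b c hac hbc
      induction c using WithTop.recTopCoe with
      | top => exact le_top
      | coe z =>
        obtain ⟨a', rfl, ha⟩ := WithTop.le_coe_iff.1 hac
        obtain ⟨b', rfl, hb⟩ := WithTop.le_coe_iff.1 hbc
        cases ha with
        | fiber i av zv hav =>
        cases hb with
        | fiber _ bv _ hbv =>
        rw [glueSup_same]
        exact WithTop.coe_le_coe.2 (Sigma.mk_le_mk_iff.2 (sup_le hav hbv)) }

end Glue

/-- In a finite best match graph every vertex has a best match in every color
that occurs on a vertex of a different color. -/
lemma exists_best_s5 {L S : Type} [Fintype L] {G : L → L → Prop} {σ : L → S}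
    (B : BMGWitness G σ) (z : L) (c : S) (hc : ∃ y, σ y = c) (hzc : σ z ≠ c) :
    ∃ y, σ y = c ∧ G z y := by
  letI := B.sup
  have hfin : ({y | σ y = c} : Set L).Finite := Set.toFinite _
  obtain ⟨y0, hy0⟩ := hc
  obtain ⟨a, ha, hmin⟩ :=
    Set.Finite.exists_minimalFor (fun y => B.ι z ⊔ B.ι y) {y | σ y = c} hfin ⟨y0, hy0⟩
  refine ⟨a, ha, (B.spec z a).2 ⟨fun e => hzc (e.trans ha), ?_⟩⟩
  intro y' hy'
  have hy'c : σ y' = c := hy'.trans ha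
  rcases B.chain (B.ι z) (B.ι z ⊔ B.ι a) (B.ι z ⊔ B.ι y') le_sup_left le_sup_left with h | h
  · exact h
  · exact hmin hy'c h

theorem stmt5 {k : ℕ} (hk : 0 < k) (L : Fin k → Type) [∀ i, Fintype (L i)]
    [∀ i, Nonempty (L i)] {S : Type}
    (G : ∀ i, L i → L i → Prop) (σ : ∀ i, L i → S)
    (hBMG : ∀ i, IsBMG (G i) (σ i)) :
    IsBMG (fun p q : Σ i, L i => ∃ h : q.1 = p.1, G p.1 p.2 (h ▸ q.2))
        (fun p : Σ i, L i => σ p.1 p.2) ↔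
      ∀ i j : Fin k, Set.range (σ i) = Set.range (σ j) := by
  constructor
  · rintro ⟨B⟩
    have key : ∀ i j : Fin k, ∀ c ∈ Set.range (σ i), c ∈ Set.range (σ j) := by
      intro i j c hc
      obtain ⟨x, hx⟩ := hc
      by_cases hj : ∃ y : L j, σ j y = c
      · exact hj
      · push_neg at hj
        have z0 : L j := Classical.arbitrary (L j)
        obtain ⟨y, hyc, hy⟩ :=
          exists_best_s5 B (⟨j, z0⟩ : Σ i, L i) c ⟨⟨i, x⟩, hx⟩ (hj z0)
        obtain ⟨jy, y2⟩ := y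
        obtain ⟨hy1, _⟩ := hy
        dsimp only at hy1
        subst hy1
        exact ⟨y2, hyc⟩
    intro i j
    exact Set.Subset.antisymm (fun c hc => key i j c hc) (fun c hc => key j i c hc)
  · intro hS
    have W : ∀ i, BMGWitness (G i) (σ i) := fun i => (hBMG i).some
    letI : ∀ i, SemilatticeSup (W i).V := fun i => (W i).sup
    letI : ∀ i, Fintype (W i).V := fun i => (W i).fin
    refine ⟨{
      V := WithTop (Σ i, (W i).V)
      sup := glueSemi
      top := WithTop.instOrderTop
      fin := inferInstanceAs (Fintype (Option (Σ i, (W i).V)))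
      ι := fun p => ((⟨p.1, (W p.1).ι p.2⟩ : Σ i, (W i).V) : WithTop (Σ i, (W i).V))
      anti := ?_
      supp := ?_
      chain := ?_
      spec := ?_ }⟩
    · -- anti
      rintro ⟨i, x2⟩ ⟨j, y2⟩ h
      cases WithTop.coe_le_coe.1 h with
      | fiber m a b hle =>
        exact congrArg (Sigma.mk i) ((W i).anti x2 y2 hle)
    · -- supp
      intro v
      induction v using WithTop.recTopCoe with
      | top =>
        exact ⟨⟨⟨0, hk⟩, Classical.arbitrary _⟩, le_top (α := WithTop (Σ i, (W i).V))⟩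
      | coe z =>
        obtain ⟨m, zv⟩ := z
        obtain ⟨x2, hx⟩ := (W m).supp zv
        exact ⟨⟨m, x2⟩, WithTop.coe_le_coe.2 (Sigma.LE.fiber m _ _ hx)⟩
    · -- chain
      intro v a b hva hvb
      induction a using WithTop.recTopCoe with
      | top => exact Or.inr (le_top (α := WithTop (Σ i, (W i).V)))
      | coe as =>
        induction b using WithTop.recTopCoe with
        | top => exact Or.inl (le_top (α := WithTop (Σ i, (W i).V)))
        | coe bs =>
          obtain ⟨v', rfl, hv⟩ := WithTop.le_coe_iff.1 hva
          have hv2 : v' ≤ bs := WithTop.coe_le_coe.1 hvb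
          cases hv with
          | fiber m vv av h1 =>
            cases hv2 with
            | fiber _ _ bv h2 =>
              rcases (W m).chain vv av bv h1 h2 with h | h
              · exact Or.inl (WithTop.coe_le_coe.2 (Sigma.LE.fiber m _ _ h))
              · exact Or.inr (WithTop.coe_le_coe.2 (Sigma.LE.fiber m _ _ h))
    · -- spec
      rintro ⟨i, x2⟩ ⟨j, y2⟩
      constructor
      · rintro ⟨h, hG⟩
        dsimp only at h
        subst h
        obtain ⟨hne, hmin⟩ := ((W j).spec x2 y2).1 hG
        refine ⟨hne, ?_⟩
        rintro ⟨j', y'2⟩ hcol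
        show glueSup _ _ ≤ glueSup _ _
        rcases eq_or_ne j' j with rfl | hne'
        · rw [glueSup_same, glueSup_same]
          exact WithTop.coe_le_coe.2 (Sigma.mk_le_mk_iff.2 (hmin y'2 hcol))
        · rw [glueSup_ne (Ne.symm hne')]
          exact le_top (α := WithTop (Σ i, (W i).V))
      · rintro ⟨hne, hmin⟩
        rcases eq_or_ne j i with rfl | hji
        · refine ⟨rfl, ((W j).spec x2 y2).2 ⟨hne, ?_⟩⟩
          intro y'2 hcol
          have h2 := hmin ⟨j, y'2⟩ hcol
          have h3 : glueSup (W := fun i => (W i).V)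
              (↑(⟨j, (W j).ι x2⟩ : Σ i, (W i).V)) (↑(⟨j, (W j).ι y2⟩ : Σ i, (W i).V)) ≤
              glueSup (↑(⟨j, (W j).ι x2⟩ : Σ i, (W i).V))
                (↑(⟨j, (W j).ι y'2⟩ : Σ i, (W i).V)) := h2
          rw [glueSup_same, glueSup_same] at h3
          have h4 : (⟨j, (W j).ι x2 ⊔ (W j).ι y2⟩ : Σ i, (W i).V) ≤
              ⟨j, (W j).ι x2 ⊔ (W j).ι y'2⟩ := WithTop.coe_le_coe.1 h3
          cases h4 with
          | fiber _ _ _ hh => exact hh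
        · exfalso
          have hmem : σ j y2 ∈ Set.range (σ i) := by
            rw [hS i j]
            exact Set.mem_range_self y2
          obtain ⟨y'2, hy'⟩ := hmem
          have h2 := hmin ⟨i, y'2⟩ hy'
          have h3 : glueSup (W := fun i => (W i).V)
              (↑(⟨i, (W i).ι x2⟩ : Σ i, (W i).V)) (↑(⟨j, (W j).ι y2⟩ : Σ i, (W i).V)) ≤
              glueSup (↑(⟨i, (W i).ι x2⟩ : Σ i, (W i).V))
                (↑(⟨i, (W i).ι y'2⟩ : Σ i, (W i).V)) := h2
          rw [glueSup_ne (Ne.symm hji), glueSup_same] at h3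
          exact WithTop.not_top_le_coe _ h3
end

section
/- Let (G,σ) be a connected 2-colored best match graph explained by (T,σ), α a thinness class with root ρ_α = max_{x∈α, y∈N(α)} lca(x,y). Then N(α) = {y ∈ L(T(ρ_α)) : σ(y) ≠ σ(α)}, i.e., the out-neighborhood of α consists exactly of the leaves below ρ_α of the opposite color. -/
theorem stmt8 {V L S : Type} [SemilatticeSup V] [Fintype L] (ι : L → V) (σ : L → S)
    (hchain : ∀ v a b : V, v ≤ a → v ≤ b → a ≤ b ∨ b ≤ a)
    (s t : S) (hst : s ≠ t) (hS : ∀ u : S, u = s ∨ u = t)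
    (hsurj : Function.Surjective σ)
    (hconn : (bmGraph ι σ).Connected) (a : L) (ρ : V)
    (huba : ∀ x ∈ thinClass (bmArc ι σ) a, ∀ y ∈ setN (bmArc ι σ) (thinClass (bmArc ι σ) a), ι x ⊔ ι y ≤ ρ)
    (hacha : ∃ x ∈ thinClass (bmArc ι σ) a, ∃ y ∈ setN (bmArc ι σ) (thinClass (bmArc ι σ) a), ι x ⊔ ι y = ρ) :
    setN (bmArc ι σ) (thinClass (bmArc ι σ) a) = {y : L | ι y ≤ ρ ∧ σ y ≠ σ a} := by
  ext y
  constructor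
  · rintro ⟨x, hx, hxy⟩
    have hay : bmArc ι σ a y := by
      have : y ∈ outN (bmArc ι σ) a := hx.1 ▸ hxy
      exact this
    exact ⟨le_trans le_sup_right (huba x hx y ⟨x, hx, hxy⟩), fun h => hay.1 h.symm⟩
  · rintro ⟨hyρ, hyσ⟩
    obtain ⟨x0, hx0, y0, hy0N, hρ⟩ := hacha
    obtain ⟨x1, hx1, h10⟩ := hy0N
    have h00 : bmArc ι σ x0 y0 := by
      have : y0 ∈ outN (bmArc ι σ) x0 := by rw [hx0.1, ← hx1.1]; exact h10
      exact this
    have ha0 : bmArc ι σ a y0 := by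
      have : y0 ∈ outN (bmArc ι σ) a := by rw [← hx1.1]; exact h10
      exact this
    have hσy0 : σ y = σ y0 := by
      have h1 := ha0.1
      rcases hS (σ y) with h | h <;> rcases hS (σ y0) with h' | h' <;>
        rcases hS (σ a) with h'' | h'' <;> simp_all
    have hx0a : σ x0 = σ a := by
      have h1 := ha0.1; have h2 := h00.1
      rcases hS (σ x0) with h | h <;> rcases hS (σ a) with h' | h' <;>
        rcases hS (σ y0) with h'' | h'' <;> simp_all
    refine ⟨x0, hx0, ?_, fun y' hy' => ?_⟩
    · rw [hx0a]; exact fun h => hyσ h.symm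
    · have h1 : ι x0 ⊔ ι y ≤ ρ := sup_le (hρ ▸ le_sup_left) hyρ
      have h2 : ρ ≤ ι x0 ⊔ ι y' := hρ ▸ h00.2 y' (by rw [hy', hσy0])
      exact h1.trans h2
end

section
/- Let (G,σ) be a connected 2-colored best match graph explained by (T,σ), and let α ≠ β be thinness classes with equal roots ρ_α = ρ_β. Then σ(α) ≠ σ(β). -/
theorem stmt10 {V L S : Type} [SemilatticeSup V] [Fintype L] (ι : L → V) (σ : L → S)
    (hchain : ∀ v a b : V, v ≤ a → v ≤ b → a ≤ b ∨ b ≤ a)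
    (s t : S) (hst : s ≠ t) (hS : ∀ u : S, u = s ∨ u = t)
    (hsurj : Function.Surjective σ)
    (hconn : (bmGraph ι σ).Connected) (a b : L)
    (hne : thinClass (bmArc ι σ) a ≠ thinClass (bmArc ι σ) b) (ρ : V)
    (huba : ∀ x ∈ thinClass (bmArc ι σ) a, ∀ y ∈ setN (bmArc ι σ) (thinClass (bmArc ι σ) a), ι x ⊔ ι y ≤ ρ)
    (hacha : ∃ x ∈ thinClass (bmArc ι σ) a, ∃ y ∈ setN (bmArc ι σ) (thinClass (bmArc ι σ) a), ι x ⊔ ι y = ρ)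
    (hubb : ∀ x ∈ thinClass (bmArc ι σ) b, ∀ y ∈ setN (bmArc ι σ) (thinClass (bmArc ι σ) b), ι x ⊔ ι y ≤ ρ)
    (hachb : ∃ x ∈ thinClass (bmArc ι σ) b, ∃ y ∈ setN (bmArc ι σ) (thinClass (bmArc ι σ) b), ι x ⊔ ι y = ρ) :
    σ a ≠ σ b := by
  intro hσ
  apply hne
  set G := bmArc ι σ with hGdef
  have h2 : ∀ u v w : L, σ u ≠ σ w → σ v ≠ σ w → σ u = σ v := by
    intro u v w hu hv
    rcases hS (σ u) with h1 | h1 <;> rcases hS (σ v) with h2' | h2' <;>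
      rcases hS (σ w) with h3 | h3 <;> simp_all
  have hsetN : ∀ c y, y ∈ setN G (thinClass G c) → G c y := by
    rintro c y ⟨x', ⟨hout, _⟩, h⟩
    have h' : y ∈ outN G x' := h
    rw [hout] at h'
    exact h'
  have key : ∀ c x₀ y₀ : L, x₀ ∈ thinClass G c → G x₀ y₀ → G c y₀ →
      ι x₀ ⊔ ι y₀ = ρ →
      (∀ x ∈ thinClass G c, ∀ y, G c y → ι x ⊔ ι y ≤ ρ) →
      (∀ y, G c y ↔ (σ y ≠ σ c ∧ ι y ≤ ρ)) ∧ (∀ z, G z c → ρ ≤ ι z ⊔ ι c) ∧ ι c ≤ ρ := by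
    intro c x₀ y₀ hx₀ harcx harcc hsup hub
    obtain ⟨hout, hin⟩ := hx₀
    have hσx₀ : σ x₀ = σ c := h2 x₀ c y₀ harcx.1 harcc.1
    have hιc : ι c ≤ ρ := le_trans le_sup_left (hub c ⟨rfl, rfl⟩ y₀ harcc)
    have hιx₀ : ι x₀ ≤ ρ := hsup ▸ le_sup_left
    refine ⟨?_, ?_, hιc⟩
    · intro y
      constructor
      · intro hy
        have hy' : G x₀ y := by
          have h' : y ∈ outN G c := hy
          rw [← hout] at h'
          exact h'
        refine ⟨fun h => hy'.1 (hσx₀.trans h.symm), ?_⟩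
        have hσy : σ y₀ = σ y := h2 y₀ y x₀ (Ne.symm harcx.1) (Ne.symm hy'.1)
        calc ι y ≤ ι x₀ ⊔ ι y := le_sup_right
          _ ≤ ι x₀ ⊔ ι y₀ := hy'.2 y₀ hσy
          _ = ρ := hsup
      · rintro ⟨hneq, hley⟩
        have hx₀y : G x₀ y := by
          refine ⟨fun h => hneq (h.symm.trans hσx₀), ?_⟩
          intro y' hy'
          have hσy' : σ y' = σ y₀ := h2 y' y₀ c (fun h => hneq (hy'.symm.trans h)) (Ne.symm harcc.1)
          calc ι x₀ ⊔ ι y ≤ ρ := sup_le hιx₀ hley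
            _ = ι x₀ ⊔ ι y₀ := hsup.symm
            _ ≤ ι x₀ ⊔ ι y' := harcx.2 y' hσy'
        have h' : y ∈ outN G x₀ := hx₀y
        rw [hout] at h'
        exact h'
    · intro z hz
      rcases hchain (ι c) (ι z ⊔ ι c) ρ le_sup_right hιc with h | h
      · have hσzy₀ : σ z = σ y₀ := h2 z y₀ c hz.1 (Ne.symm harcc.1)
        have h1 : ρ ≤ ι x₀ ⊔ ι z := by
          calc ρ = ι x₀ ⊔ ι y₀ := hsup.symm
            _ ≤ ι x₀ ⊔ ι z := harcx.2 z hσzy₀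
        have hzx₀ : G z x₀ := by
          have h' : z ∈ inN G c := hz
          rw [← hin] at h'
          exact h'
        have h3 : ι z ⊔ ι x₀ ≤ ι z ⊔ ι c := hzx₀.2 c hσx₀.symm
        calc ρ ≤ ι x₀ ⊔ ι z := h1
          _ = ι z ⊔ ι x₀ := sup_comm _ _
          _ ≤ ι z ⊔ ι c := h3
      · exact h
  obtain ⟨x₀, hx₀, y₀, hy₀, hxy₀⟩ := hacha
  obtain ⟨x₁, hx₁, y₁, hy₁, hxy₁⟩ := hachb
  have harca : G a y₀ := hsetN a y₀ hy₀
  have harcb : G b y₁ := hsetN b y₁ hy₁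
  have harcx₀ : G x₀ y₀ := by
    have h' : y₀ ∈ outN G a := harca
    rw [← hx₀.1] at h'
    exact h'
  have harcx₁ : G x₁ y₁ := by
    have h' : y₁ ∈ outN G b := harcb
    rw [← hx₁.1] at h'
    exact h'
  have huba' : ∀ x ∈ thinClass G a, ∀ y, G a y → ι x ⊔ ι y ≤ ρ :=
    fun x hx y hy => huba x hx y ⟨a, ⟨rfl, rfl⟩, hy⟩
  have hubb' : ∀ x ∈ thinClass G b, ∀ y, G b y → ι x ⊔ ι y ≤ ρ :=
    fun x hx y hy => hubb x hx y ⟨b, ⟨rfl, rfl⟩, hy⟩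
  obtain ⟨houta, hina, hιa⟩ := key a x₀ y₀ hx₀ harcx₀ harca hxy₀ huba'
  obtain ⟨houtb, hinb, hιb⟩ := key b x₁ y₁ hx₁ harcx₁ harcb hxy₁ hubb'
  have hout : outN G a = outN G b := by
    ext y
    simp only [outN, Set.mem_setOf_eq, houta y, houtb y, hσ]
  have hin : inN G a = inN G b := by
    ext z
    constructor
    · intro hz
      have hz' : G z a := hz
      refine ⟨fun h => hz'.1 (h.trans hσ.symm), ?_⟩
      intro y' hy'
      calc ι z ⊔ ι b ≤ ι z ⊔ ι a := sup_le le_sup_left (le_trans hιb (hina z hz'))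
        _ ≤ ι z ⊔ ι y' := hz'.2 y' (hy'.trans hσ.symm)
    · intro hz
      have hz' : G z b := hz
      refine ⟨fun h => hz'.1 (h.trans hσ), ?_⟩
      intro y' hy'
      calc ι z ⊔ ι a ≤ ι z ⊔ ι b := sup_le le_sup_left (le_trans hιa (hinb z hz'))
        _ ≤ ι z ⊔ ι y' := hz'.2 y' (hy'.trans hσ)
  ext y
  simp only [thinClass, Set.mem_setOf_eq, hout, hin]
end

section
/- Let (G,σ) be a connected 2-colored best match graph and α, β thinness classes with σ(α)≠σ(β). Then exactly one of the following holds: (i) α⊆N(β) and β⊆N(α), in which case ρ_α=ρ_β; (ii) α⊆N(β) and β∩N(α)=∅, in which case ρ_α≺ρ_β; (iii) β⊆N(α) and α∩N(β)=∅, in which case ρ_β≺ρ_α; (iv) α∩N(β)=β∩N(α)=∅, in which case ρ_α and ρ_β are ⪯-incomparable. -/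
lemma bm_mem_thinClass_self {L : Type} (G : L → L → Prop) (x : L) : x ∈ thinClass G x :=
  ⟨rfl, rfl⟩

lemma bm_setN_thinClass {L : Type} (G : L → L → Prop) (x : L) :
    setN G (thinClass G x) = outN G x := by
  ext y
  constructor
  · rintro ⟨z, hz, hzy⟩
    have : y ∈ outN G z := hzy
    rwa [hz.1] at this
  · intro h
    exact ⟨x, bm_mem_thinClass_self G x, h⟩

lemma bm_extend {V L S : Type} [SemilatticeSup V] {ι : L → V} {σ : L → S} {x y y' : L}
    (h : bmArc ι σ x y) (hcol : σ y' = σ y) (hle : ι y' ≤ ι x ⊔ ι y) : bmArc ι σ x y' := by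
  refine ⟨fun hxy => h.1 (hxy.trans hcol), fun z hz => ?_⟩
  exact le_trans (sup_le le_sup_left hle) (h.2 z (hz.trans hcol))

lemma bm_exists_best {V L S : Type} [SemilatticeSup V] [Fintype L] {ι : L → V} {σ : L → S}
    (hchain : ∀ v a b : V, v ≤ a → v ≤ b → a ≤ b ∨ b ≤ a)
    {x : L} {c : S} (hc : c ≠ σ x) (hex : ∃ y, σ y = c) :
    ∃ y, σ y = c ∧ bmArc ι σ x y := by
  obtain ⟨y0, hy0⟩ := hex
  obtain ⟨y, hy, hmin⟩ := Set.Finite.exists_minimalFor (fun z => ι x ⊔ ι z)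
    {z | σ z = c} (Set.toFinite _) ⟨y0, hy0⟩
  refine ⟨y, hy, fun hxy => hc (hy.symm.trans hxy.symm), fun y' hy' => ?_⟩
  have hy'c : σ y' = c := hy'.trans hy
  rcases hchain (ι x) (ι x ⊔ ι y) (ι x ⊔ ι y') le_sup_left le_sup_left with h | h
  · exact h
  · exact hmin hy'c h

lemma bm_two_col {S : Type} (s t : S) (hS : ∀ u : S, u = s ∨ u = t) {u v w : S}
    (huv : u ≠ v) (hwu : w ≠ u) : w = v := by
  rcases hS u with hu | hu <;> rcases hS v with hv | hv <;> rcases hS w with hw | hw <;>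
    simp_all

lemma bm_color_thinClass {V L S : Type} [SemilatticeSup V] [Fintype L] (ι : L → V) (σ : L → S)
    (hchain : ∀ v a b : V, v ≤ a → v ≤ b → a ≤ b ∨ b ≤ a)
    (s t : S) (hst : s ≠ t) (hS : ∀ u : S, u = s ∨ u = t)
    (hsurj : Function.Surjective σ) {a x : L}
    (hx : x ∈ thinClass (bmArc ι σ) a) : σ x = σ a := by
  obtain ⟨c, hc, hex⟩ : ∃ c : S, c ≠ σ a ∧ ∃ y, σ y = c := by
    rcases hS (σ a) with h | h
    · exact ⟨t, by rw [h]; exact hst.symm, hsurj t⟩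
    · exact ⟨s, by rw [h]; exact hst, hsurj s⟩
  obtain ⟨y, hyc, hay⟩ := bm_exists_best hchain hc hex
  have hxy : bmArc ι σ x y := by
    have : y ∈ outN (bmArc ι σ) a := hay
    rw [← hx.1] at this
    exact this
  exact bm_two_col s t hS (fun h => hc (hyc.symm.trans h)) hxy.1

theorem stmt11 {V L S : Type} [SemilatticeSup V] [Fintype L] (ι : L → V) (σ : L → S)
    (hchain : ∀ v a b : V, v ≤ a → v ≤ b → a ≤ b ∨ b ≤ a)
    (s t : S) (hst : s ≠ t) (hS : ∀ u : S, u = s ∨ u = t)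
    (hsurj : Function.Surjective σ)
    (hconn : (bmGraph ι σ).Connected) (a b : L) (hcol : σ a ≠ σ b) (ρa ρb : V)
    (huba : ∀ x ∈ thinClass (bmArc ι σ) a, ∀ y ∈ setN (bmArc ι σ) (thinClass (bmArc ι σ) a), ι x ⊔ ι y ≤ ρa)
    (hacha : ∃ x ∈ thinClass (bmArc ι σ) a, ∃ y ∈ setN (bmArc ι σ) (thinClass (bmArc ι σ) a), ι x ⊔ ι y = ρa)
    (hubb : ∀ x ∈ thinClass (bmArc ι σ) b, ∀ y ∈ setN (bmArc ι σ) (thinClass (bmArc ι σ) b), ι x ⊔ ι y ≤ ρb)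
    (hachb : ∃ x ∈ thinClass (bmArc ι σ) b, ∃ y ∈ setN (bmArc ι σ) (thinClass (bmArc ι σ) b), ι x ⊔ ι y = ρb) :
    (thinClass (bmArc ι σ) a ⊆ setN (bmArc ι σ) (thinClass (bmArc ι σ) b) ∧
     thinClass (bmArc ι σ) b ⊆ setN (bmArc ι σ) (thinClass (bmArc ι σ) a) ∧ ρa = ρb) ∨
    (thinClass (bmArc ι σ) a ⊆ setN (bmArc ι σ) (thinClass (bmArc ι σ) b) ∧
     thinClass (bmArc ι σ) b ∩ setN (bmArc ι σ) (thinClass (bmArc ι σ) a) = ∅ ∧ ρa < ρb) ∨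
    (thinClass (bmArc ι σ) b ⊆ setN (bmArc ι σ) (thinClass (bmArc ι σ) a) ∧
     thinClass (bmArc ι σ) a ∩ setN (bmArc ι σ) (thinClass (bmArc ι σ) b) = ∅ ∧ ρb < ρa) ∨
    (thinClass (bmArc ι σ) a ∩ setN (bmArc ι σ) (thinClass (bmArc ι σ) b) = ∅ ∧
     thinClass (bmArc ι σ) b ∩ setN (bmArc ι σ) (thinClass (bmArc ι σ) a) = ∅ ∧
     ¬ ρa ≤ ρb ∧ ¬ ρb ≤ ρa) := by

  classical
  set G := bmArc ι σ with hGdef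
  have hNa : setN G (thinClass G a) = outN G a := bm_setN_thinClass G a
  have hNb : setN G (thinClass G b) = outN G b := bm_setN_thinClass G b
  -- color facts
  have hcolcls : ∀ {z w : L}, z ∈ thinClass G w → σ z = σ w :=
    fun {z w} hz => bm_color_thinClass ι σ hchain s t hst hS hsurj hz
  have hoppa : ∀ {z : L}, σ z ≠ σ a → σ z = σ b := fun {z} h => bm_two_col s t hS hcol h
  have hoppb : ∀ {z : L}, σ z ≠ σ b → σ z = σ a := fun {z} h => bm_two_col s t hS hcol.symm h
  -- achieving pairs
  obtain ⟨x0, hx0, y0, hy0, hρa⟩ := hacha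
  obtain ⟨y1, hy1, x1, hx1, hρb⟩ := hachb
  have hx0y0 : G x0 y0 := by
    have : y0 ∈ outN G a := by rw [← hNa]; exact hy0
    rw [← hx0.1] at this; exact this
  have hy1x1 : G y1 x1 := by
    have : x1 ∈ outN G b := by rw [← hNb]; exact hx1
    rw [← hy1.1] at this; exact this
  have hσx0 : σ x0 = σ a := hcolcls hx0
  have hσy1 : σ y1 = σ b := hcolcls hy1
  have hσy0 : σ y0 = σ b := hoppa (fun h => hx0y0.1 (hσx0.trans h.symm))
  have hσx1 : σ x1 = σ a := hoppb (fun h => hy1x1.1 (hσy1.trans h.symm))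
  -- dichotomies
  have hdab : (thinClass G a ⊆ setN G (thinClass G b)) ∨
      (thinClass G a ∩ setN G (thinClass G b) = ∅) := by
    by_cases h : ∃ x ∈ thinClass G a, G b x
    · left
      intro x hx
      obtain ⟨x', hx', hbx'⟩ := h
      have hb : b ∈ inN G x' := hbx'
      rw [hx'.2, ← hx.2] at hb
      rw [hNb]
      exact hb
    · right
      rw [Set.eq_empty_iff_forall_notMem]
      rintro x ⟨hx, hxN⟩
      rw [hNb] at hxN
      exact h ⟨x, hx, hxN⟩
  have hdba : (thinClass G b ⊆ setN G (thinClass G a)) ∨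
      (thinClass G b ∩ setN G (thinClass G a) = ∅) := by
    by_cases h : ∃ x ∈ thinClass G b, G a x
    · left
      intro x hx
      obtain ⟨x', hx', hbx'⟩ := h
      have hb : a ∈ inN G x' := hbx'
      rw [hx'.2, ← hx.2] at hb
      rw [hNa]
      exact hb
    · right
      rw [Set.eq_empty_iff_forall_notMem]
      rintro x ⟨hx, hxN⟩
      rw [hNa] at hxN
      exact h ⟨x, hx, hxN⟩
  rcases hdab with h1 | h1 <;> rcases hdba with h2 | h2
  · -- case (i)
    left
    refine ⟨h1, h2, le_antisymm ?_ ?_⟩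
    · -- ρa ≤ ρb
      have hbmem : b ∈ setN G (thinClass G a) := h2 (bm_mem_thinClass_self G b)
      have hx0mem : x0 ∈ setN G (thinClass G b) := h1 hx0
      have h3 : ι x0 ⊔ ι y0 ≤ ι x0 ⊔ ι b := hx0y0.2 b (hσy0.symm)
      have h4 : ι b ⊔ ι x0 ≤ ρb := hubb b (bm_mem_thinClass_self G b) x0 hx0mem
      calc ρa = ι x0 ⊔ ι y0 := hρa.symm
        _ ≤ ι x0 ⊔ ι b := h3
        _ = ι b ⊔ ι x0 := sup_comm _ _
        _ ≤ ρb := h4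
    · -- ρb ≤ ρa
      have hamem : a ∈ setN G (thinClass G b) := h1 (bm_mem_thinClass_self G a)
      have hy1mem : y1 ∈ setN G (thinClass G a) := h2 hy1
      have h3 : ι y1 ⊔ ι x1 ≤ ι y1 ⊔ ι a := hy1x1.2 a (hσx1.symm)
      have h4 : ι a ⊔ ι y1 ≤ ρa := huba a (bm_mem_thinClass_self G a) y1 hy1mem
      calc ρb = ι y1 ⊔ ι x1 := hρb.symm
        _ ≤ ι y1 ⊔ ι a := h3
        _ = ι a ⊔ ι y1 := sup_comm _ _
        _ ≤ ρa := h4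
  · -- case (ii)
    right; left
    refine ⟨h1, h2, ?_⟩
    have hx0mem : x0 ∈ setN G (thinClass G b) := h1 hx0
    have hx0b : G b x0 := by rw [hNb] at hx0mem; exact hx0mem
    have h4 : ι b ⊔ ι x0 ≤ ρb := hubb b (bm_mem_thinClass_self G b) x0 hx0mem
    have hnot : ¬ (ι x0 ⊔ ι b ≤ ρa) := by
      intro hle
      have hbmem : b ∈ setN G (thinClass G a) := by
        rw [hNa, ← hx0.1]
        exact bm_extend hx0y0 hσy0.symm
          (le_sup_right.trans (hle.trans (le_of_eq hρa.symm)))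
      exact absurd h2 (by
        rw [Set.eq_empty_iff_forall_notMem]
        push_neg
        exact ⟨b, bm_mem_thinClass_self G b, hbmem⟩)
    rcases hchain (ι x0) ρa (ι x0 ⊔ ι b) (le_of_le_of_eq le_sup_left hρa) le_sup_left with h | h
    · have : ρa < ι x0 ⊔ ι b := lt_of_le_not_ge h hnot
      calc ρa < ι x0 ⊔ ι b := this
        _ = ι b ⊔ ι x0 := sup_comm _ _
        _ ≤ ρb := h4
    · exact absurd h hnot
  · -- case (iii)
    right; right; left
    refine ⟨h2, h1, ?_⟩
    have hy1mem : y1 ∈ setN G (thinClass G a) := h2 hy1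
    have hy1a : G a y1 := by rw [hNa] at hy1mem; exact hy1mem
    have h4 : ι a ⊔ ι y1 ≤ ρa := huba a (bm_mem_thinClass_self G a) y1 hy1mem
    have hnot : ¬ (ι y1 ⊔ ι a ≤ ρb) := by
      intro hle
      have hamem : a ∈ setN G (thinClass G b) := by
        rw [hNb, ← hy1.1]
        exact bm_extend hy1x1 hσx1.symm
          (le_sup_right.trans (hle.trans (le_of_eq hρb.symm)))
      exact absurd h1 (by
        rw [Set.eq_empty_iff_forall_notMem]
        push_neg
        exact ⟨a, bm_mem_thinClass_self G a, hamem⟩)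
    rcases hchain (ι y1) ρb (ι y1 ⊔ ι a) (le_of_le_of_eq le_sup_left hρb) le_sup_left with h | h
    · have : ρb < ι y1 ⊔ ι a := lt_of_le_not_ge h hnot
      calc ρb < ι y1 ⊔ ι a := this
        _ = ι a ⊔ ι y1 := sup_comm _ _
        _ ≤ ρa := h4
    · exact absurd h hnot
  · -- case (iv)
    right; right; right
    refine ⟨h1, h2, ?_, ?_⟩
    · intro hle
      have hx0le : ι x0 ≤ ι y1 ⊔ ι x1 := by
        calc ι x0 ≤ ρa := le_of_le_of_eq le_sup_left hρa
          _ ≤ ρb := hle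
          _ = ι y1 ⊔ ι x1 := hρb.symm
      have hx0mem : x0 ∈ setN G (thinClass G b) := by
        rw [hNb, ← hy1.1]
        exact bm_extend hy1x1 (hσx0.trans hσx1.symm) hx0le
      exact absurd h1 (by
        rw [Set.eq_empty_iff_forall_notMem]
        push_neg
        exact ⟨x0, hx0, hx0mem⟩)
    · intro hle
      have hy1le : ι y1 ≤ ι x0 ⊔ ι y0 := by
        calc ι y1 ≤ ρb := le_of_le_of_eq le_sup_left hρb
          _ ≤ ρa := hle
          _ = ι x0 ⊔ ι y0 := hρa.symm
      have hy1mem : y1 ∈ setN G (thinClass G a) := by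
        rw [hNa, ← hx0.1]
        exact bm_extend hx0y0 (hσy1.trans hσy0.symm) hy1le
      exact absurd h2 (by
        rw [Set.eq_empty_iff_forall_notMem]
        push_neg
        exact ⟨y1, hy1, hy1mem⟩)
end

section
/- Let (G,σ) be a connected 2-colored best match graph. For every thinness class α it holds that N(N(N(α))) ⊆ N(α). -/
theorem stmt12 {V L S : Type} [SemilatticeSup V] [Fintype L] (ι : L → V) (σ : L → S)
    (hchain : ∀ v a b : V, v ≤ a → v ≤ b → a ≤ b ∨ b ≤ a)
    (s t : S) (hst : s ≠ t) (hS : ∀ u : S, u = s ∨ u = t)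
    (hsurj : Function.Surjective σ)
    (hconn : (bmGraph ι σ).Connected) :
    ∀ a : L,
      setN (bmArc ι σ) (setN (bmArc ι σ) (setN (bmArc ι σ) (thinClass (bmArc ι σ) a))) ⊆
        setN (bmArc ι σ) (thinClass (bmArc ι σ) a) := by
  intro a z hz
  obtain ⟨y, ⟨b, ⟨a', ha', hab'⟩, hby⟩, hyz⟩ := hz
  have hab : bmArc ι σ a b := by
    have : b ∈ outN (bmArc ι σ) a := ha'.1 ▸ hab'
    exact this
  have h2 : ∀ x w u : L, σ x ≠ σ w → σ u ≠ σ w → σ u = σ x := by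
    intro x w u hxw huw
    rcases hS (σ x) with hx | hx <;> rcases hS (σ w) with hw | hw <;>
      rcases hS (σ u) with hu | hu <;> simp_all
  have hya : σ y = σ a := h2 a b y hab.1 (Ne.symm hby.1)
  have hzb : σ z = σ b := h2 b a z (Ne.symm hab.1) (hya ▸ Ne.symm hyz.1)
  have hz_le : ι z ≤ ι b ⊔ ι a := by
    have h1 : ι z ≤ ι y ⊔ ι b := le_sup_right.trans (hyz.2 b hzb.symm)
    have h3 : ι b ⊔ ι y ≤ ι b ⊔ ι a := hby.2 a hya.symm
    calc ι z ≤ ι y ⊔ ι b := h1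
      _ = ι b ⊔ ι y := sup_comm _ _
      _ ≤ ι b ⊔ ι a := h3
  refine ⟨a, ⟨rfl, rfl⟩, ?_, ?_⟩
  · exact fun h => hab.1 (h.trans hzb)
  · intro z' hz'
    have : ι a ⊔ ι z ≤ ι a ⊔ ι b :=
      sup_le le_sup_left (hz_le.trans (sup_comm (ι b) (ι a)).le)
    exact this.trans (hab.2 z' (hz'.trans hzb))
end

section
/- Let (G,σ) be a connected 2-colored best match graph and α, β thinness classes. If α∩N(β)=∅ and β∩N(α)=∅, then N(α)∩N(N(β))=∅ and N(β)∩N(N(α))=∅. -/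
theorem bm_key {V L S : Type} [SemilatticeSup V] (ι : L → V) (σ : L → S)
    (hchain : ∀ v a b : V, v ≤ a → v ≤ b → a ≤ b ∨ b ≤ a)
    (s t : S) (hS : ∀ u : S, u = s ∨ u = t) (a b : L)
    (h1 : thinClass (bmArc ι σ) a ∩ setN (bmArc ι σ) (thinClass (bmArc ι σ) b) = ∅)
    (h2 : thinClass (bmArc ι σ) b ∩ setN (bmArc ι σ) (thinClass (bmArc ι σ) a) = ∅) :
    setN (bmArc ι σ) (thinClass (bmArc ι σ) a) ∩
      setN (bmArc ι σ) (setN (bmArc ι σ) (thinClass (bmArc ι σ) b)) = ∅ := by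
  ext u
  simp only [Set.mem_inter_iff, Set.mem_empty_iff_false, iff_false]
  rintro ⟨⟨a', ha', hau⟩, ⟨w, ⟨b', hb', hbw⟩, hwu⟩⟩
  have hne1 : σ a' ≠ σ u := hau.1
  have hne2 : σ w ≠ σ u := hwu.1
  have hne3 : σ b' ≠ σ w := hbw.1
  have hwa : σ w = σ a' := by
    rcases hS (σ w) with e1 | e1 <;> rcases hS (σ a') with e2 | e2 <;>
      rcases hS (σ u) with e3 | e3 <;> simp_all
  have hbu : σ b' = σ u := by
    rcases hS (σ b') with e1 | e1 <;> rcases hS (σ w) with e2 | e2 <;>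
      rcases hS (σ u) with e3 | e3 <;> simp_all
  -- key sups
  have hrq : ι w ⊔ ι u ≤ ι b' ⊔ ι w := by
    have := hwu.2 b' hbu
    rwa [sup_comm (ι w) (ι b')] at this
  have hpq : ι a' ⊔ ι u ≤ ι b' ⊔ ι w ∨ ι b' ⊔ ι w ≤ ι a' ⊔ ι u := by
    rcases hchain (ι u) (ι a' ⊔ ι u) (ι w ⊔ ι u) le_sup_right le_sup_right with h | h
    · exact Or.inl (h.trans hrq)
    · exact hchain (ι w ⊔ ι u) _ _ h hrq
  rcases hpq with hpq | hqp
  · -- then bmArc b' a', contradicting h1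
    have hba : bmArc ι σ b' a' := by
      refine ⟨fun h => hne1 (h.symm ▸ hbu), fun y' hy' => ?_⟩
      have ha'q : ι a' ≤ ι b' ⊔ ι w := le_trans le_sup_left hpq
      exact (sup_le le_sup_left ha'q).trans (hbw.2 y' (hy'.trans hwa.symm))
    have := Set.eq_empty_iff_forall_notMem.mp h1 a'
    exact this ⟨ha', b', hb', hba⟩
  · -- then bmArc a' b', contradicting h2
    have hab : bmArc ι σ a' b' := by
      refine ⟨fun h => hne1 (h.trans hbu), fun y' hy' => ?_⟩
      have hb'p : ι b' ≤ ι a' ⊔ ι u := le_trans le_sup_left hqp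
      exact (sup_le le_sup_left hb'p).trans (hau.2 y' (hy'.trans hbu))
    have := Set.eq_empty_iff_forall_notMem.mp h2 b'
    exact this ⟨hb', a', ha', hab⟩

theorem stmt13 {V L S : Type} [SemilatticeSup V] [Fintype L] (ι : L → V) (σ : L → S)
    (hchain : ∀ v a b : V, v ≤ a → v ≤ b → a ≤ b ∨ b ≤ a)
    (s t : S) (hst : s ≠ t) (hS : ∀ u : S, u = s ∨ u = t)
    (hsurj : Function.Surjective σ)
    (hconn : (bmGraph ι σ).Connected) :
    ∀ a b : L,
      thinClass (bmArc ι σ) a ∩ setN (bmArc ι σ) (thinClass (bmArc ι σ) b) = ∅ →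
      thinClass (bmArc ι σ) b ∩ setN (bmArc ι σ) (thinClass (bmArc ι σ) a) = ∅ →
      setN (bmArc ι σ) (thinClass (bmArc ι σ) a) ∩
          setN (bmArc ι σ) (setN (bmArc ι σ) (thinClass (bmArc ι σ) b)) = ∅ ∧
      setN (bmArc ι σ) (thinClass (bmArc ι σ) b) ∩
          setN (bmArc ι σ) (setN (bmArc ι σ) (thinClass (bmArc ι σ) a)) = ∅ := by
  intro a b h1 h2
  exact ⟨bm_key ι σ hchain s t hS a b h1 h2, bm_key ι σ hchain s t hS b a h2 h1⟩
end

section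
/- Let (G,σ) be a connected 2-colored best match graph and α, β thinness classes with α∩N(N(β))=∅, β∩N(N(α))=∅, and N(α)∩N(β)≠∅. Then N⁻(α)=N⁻(β) and either N(α)⊆N(β) or N(β)⊆N(α). -/
lemma setN_thinClass {L : Type} (G : L → L → Prop) (a : L) :
    setN G (thinClass G a) = outN G a := by
  ext y
  constructor
  · rintro ⟨a', ⟨ho, _⟩, h⟩
    have : y ∈ outN G a' := h
    rwa [ho] at this
  · intro h
    exact ⟨a, ⟨rfl, rfl⟩, h⟩

lemma setNin_thinClass {L : Type} (G : L → L → Prop) (a : L) :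
    setNin G (thinClass G a) = inN G a := by
  ext y
  constructor
  · rintro ⟨a', ⟨_, hi⟩, h⟩
    have : y ∈ inN G a' := h
    rwa [hi] at this
  · intro h
    exact ⟨a, ⟨rfl, rfl⟩, h⟩

/-- key lemma for the in-neighborhood equality -/
lemma inN_sub_aux {V L S : Type} [SemilatticeSup V] (ι : L → V) (σ : L → S)
    (hchain : ∀ v a b : V, v ≤ a → v ≤ b → a ≤ b ∨ b ≤ a)
    (twocolor : ∀ u v u' : S, u ≠ v → u' ≠ v → u = u')
    (a b w : L) (haw : bmArc ι σ a w) (hbw : bmArc ι σ b w)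
    (hab : ∀ u, bmArc ι σ b u → ¬ bmArc ι σ u a) :
    ∀ x, bmArc ι σ x a → bmArc ι σ x b := by
  intro x hxa
  have hax : σ a = σ b := twocolor _ _ _ haw.1 hbw.1
  have hxw : σ x = σ w := twocolor _ _ _ hxa.1 haw.1.symm
  have hpX : ι a ⊔ ι w ≤ ι x ⊔ ι a := by
    have h := haw.2 x hxw
    rwa [sup_comm (ι x) (ι a)]
  have hcomp : ι b ⊔ ι w ≤ ι x ⊔ ι a ∨ ι x ⊔ ι a ≤ ι b ⊔ ι w := by
    rcases hchain (ι w) (ι a ⊔ ι w) (ι b ⊔ ι w) le_sup_right le_sup_right with h | h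
    · rcases hchain (ι a ⊔ ι w) (ι x ⊔ ι a) (ι b ⊔ ι w) hpX h with h2 | h2
      · exact Or.inr h2
      · exact Or.inl h2
    · exact Or.inl (h.trans hpX)
  rcases hcomp with hqX | hXq
  · refine ⟨fun h => hxa.1 (h.trans hax.symm), fun y' hy' => ?_⟩
    have h1 : ι x ⊔ ι b ≤ ι x ⊔ ι a :=
      sup_le le_sup_left (le_trans le_sup_left hqX)
    exact h1.trans (hxa.2 y' (hy'.trans hax.symm))
  · exfalso
    refine hab x ?_ hxa
    refine ⟨fun h => hxa.1 (hax.trans h).symm, fun w'' hw'' => ?_⟩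
    have h1 : ι b ⊔ ι x ≤ ι b ⊔ ι w :=
      sup_le le_sup_left (le_trans le_sup_left hXq)
    exact h1.trans (hbw.2 w'' (hw''.trans hxw))

/-- key lemma for the out-neighborhood containment -/
lemma outN_sub_aux {V L S : Type} [SemilatticeSup V] (ι : L → V) (σ : L → S)
    (twocolor : ∀ u v u' : S, u ≠ v → u' ≠ v → u = u')
    (a b w : L) (haw : bmArc ι σ a w) (hbw : bmArc ι σ b w)
    (hpq : ι a ⊔ ι w ≤ ι b ⊔ ι w) :
    ∀ y, bmArc ι σ a y → bmArc ι σ b y := by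
  intro y hay
  have hyw : σ y = σ w := twocolor _ _ _ hay.1.symm haw.1.symm
  refine ⟨fun h => hbw.1 (h.trans hyw), fun y' hy' => ?_⟩
  have h1 : ι a ⊔ ι y ≤ ι a ⊔ ι w := hay.2 w hyw.symm
  have h2 : ι b ⊔ ι y ≤ ι b ⊔ ι w :=
    sup_le le_sup_left ((le_sup_right).trans (h1.trans hpq))
  exact h2.trans (hbw.2 y' (hy'.trans hyw))

theorem stmt14 {V L S : Type} [SemilatticeSup V] [Fintype L] (ι : L → V) (σ : L → S)
    (hchain : ∀ v a b : V, v ≤ a → v ≤ b → a ≤ b ∨ b ≤ a)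
    (s t : S) (hst : s ≠ t) (hS : ∀ u : S, u = s ∨ u = t)
    (hsurj : Function.Surjective σ)
    (hconn : (bmGraph ι σ).Connected) :
    ∀ a b : L,
      thinClass (bmArc ι σ) a ∩ setN (bmArc ι σ) (setN (bmArc ι σ) (thinClass (bmArc ι σ) b)) = ∅ →
      thinClass (bmArc ι σ) b ∩ setN (bmArc ι σ) (setN (bmArc ι σ) (thinClass (bmArc ι σ) a)) = ∅ →
      (setN (bmArc ι σ) (thinClass (bmArc ι σ) a) ∩ setN (bmArc ι σ) (thinClass (bmArc ι σ) b)).Nonempty →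
      setNin (bmArc ι σ) (thinClass (bmArc ι σ) a) = setNin (bmArc ι σ) (thinClass (bmArc ι σ) b) ∧
      (setN (bmArc ι σ) (thinClass (bmArc ι σ) a) ⊆ setN (bmArc ι σ) (thinClass (bmArc ι σ) b) ∨
       setN (bmArc ι σ) (thinClass (bmArc ι σ) b) ⊆ setN (bmArc ι σ) (thinClass (bmArc ι σ) a)) := by
  intro a b hAB hBA hN
  have twocolor : ∀ u v u' : S, u ≠ v → u' ≠ v → u = u' := by
    intro u v u' h1 h2
    rcases hS u with hu | hu <;> rcases hS v with hv | hv <;> rcases hS u' with hu' | hu' <;>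
      simp_all
  simp only [setN_thinClass] at hAB hBA hN
  obtain ⟨w, hwa, hwb⟩ := hN
  have hwa : bmArc ι σ a w := hwa
  have hwb : bmArc ι σ b w := hwb
  have hab : ∀ u, bmArc ι σ b u → ¬ bmArc ι σ u a := by
    intro u hbu hua
    have h : a ∈ thinClass (bmArc ι σ) a ∩
        setN (bmArc ι σ) (outN (bmArc ι σ) b) := ⟨⟨rfl, rfl⟩, u, hbu, hua⟩
    rw [hAB] at h
    exact h
  have hba : ∀ u, bmArc ι σ a u → ¬ bmArc ι σ u b := by
    intro u hau hub
    have h : b ∈ thinClass (bmArc ι σ) b ∩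
        setN (bmArc ι σ) (outN (bmArc ι σ) a) := ⟨⟨rfl, rfl⟩, u, hau, hub⟩
    rw [hBA] at h
    exact h
  constructor
  · simp only [setNin_thinClass]
    ext x
    exact ⟨fun h => inN_sub_aux ι σ hchain twocolor a b w hwa hwb hab x h,
           fun h => inN_sub_aux ι σ hchain twocolor b a w hwb hwa hba x h⟩
  · simp only [setN_thinClass]
    rcases hchain (ι w) (ι a ⊔ ι w) (ι b ⊔ ι w) le_sup_right le_sup_right with h | h
    · exact Or.inl fun y hy => outN_sub_aux ι σ twocolor a b w hwa hwb h y hy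
    · exact Or.inr fun y hy => outN_sub_aux ι σ twocolor b a w hwb hwa h y hy
end

section
/- Let G be a connected 2-colored digraph satisfying: (N1) for all thinness classes α,β with α∩N(β)=β∩N(α)=∅, one has N(α)∩N(N(β))=N(β)∩N(N(α))=∅; (N2) N(N(N(α)))⊆N(α) for all α; (N3) if α∩N(N(β))=β∩N(N(α))=∅ and N(α)∩N(β)≠∅, then N⁻(α)=N⁻(β) and N(α)⊆N(β) or N(β)⊆N(α). Define R(α)=N(α)∪N(N(α))∪N(N(N(α)))∪⋯ and W={α : N⁻(α)=∅}. Then the collection {R(α) : α a thinness class} is a hierarchy on L∖⋃_{α∈W}α, i.e., any two members are nested or disjoint, and L∖⋃_{α∈W}α is itself a member. -/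
namespace BMGaux

variable {L : Type} (G : L → L → Prop)

lemma mem_thin_self (a : L) : a ∈ thinClass G a := ⟨rfl, rfl⟩

lemma setN_thin (a : L) : setN G (thinClass G a) = {y | G a y} := by
  ext y
  constructor
  · rintro ⟨z, ⟨hz, -⟩, hzy⟩
    have h : y ∈ outN G z := hzy
    rw [hz] at h
    exact h
  · intro h
    exact ⟨a, mem_thin_self G a, h⟩

lemma setNin_thin (a : L) : setNin G (thinClass G a) = {y | G y a} := by
  ext y
  constructor
  · rintro ⟨z, ⟨-, hz⟩, hyz⟩
    have h : y ∈ inN G z := hyz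
    rw [hz] at h
    exact h
  · intro h
    exact ⟨a, mem_thin_self G a, h⟩

lemma thin_inter_empty (a : L) (A : Set L) (h : a ∉ setN G A) :
    thinClass G a ∩ setN G A = ∅ := by
  ext y
  simp only [Set.mem_inter_iff, Set.mem_empty_iff_false, iff_false, not_and]
  rintro ⟨-, hy⟩ ⟨z, hzA, hzy⟩
  have hz : z ∈ inN G y := hzy
  rw [hy] at hz
  exact h ⟨z, hzA, hz⟩

lemma setN_mono {A B : Set L} (h : A ⊆ B) : setN G A ⊆ setN G B := by
  rintro y ⟨z, hz, hzy⟩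
  exact ⟨z, h hz, hzy⟩

lemma iter_mono (n : ℕ) {A B : Set L} (h : A ⊆ B) :
    (setN G)^[n] A ⊆ (setN G)^[n] B := by
  induction n with
  | zero => exact h
  | succ n ih =>
    rw [Function.iterate_succ_apply', Function.iterate_succ_apply']
    exact setN_mono G ih

lemma reach_eq
    (hN2 : ∀ a : L, setN G (setN G (setN G (thinClass G a))) ⊆ setN G (thinClass G a))
    (a : L) :
    reachSet G (thinClass G a) =
      setN G (thinClass G a) ∪ setN G (setN G (thinClass G a)) := by
  have h2set : ∀ X : Set L, (setN G)^[2] X = setN G (setN G X) := by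
    intro X
    rw [show (2:ℕ) = 1 + 1 from rfl, Function.iterate_add_apply,
      Function.iterate_one]
  have key : ∀ n : ℕ, (setN G)^[n] (setN G (thinClass G a)) ⊆
      setN G (thinClass G a) ∪ setN G (setN G (thinClass G a)) ∧
      (setN G)^[n+1] (setN G (thinClass G a)) ⊆
      setN G (thinClass G a) ∪ setN G (setN G (thinClass G a)) := by
    intro n
    induction n with
    | zero =>
      constructor
      · exact Set.subset_union_left
      · rw [Function.iterate_succ_apply', Function.iterate_zero_apply]
        exact Set.subset_union_right
    | succ n ih =>
      refine ⟨ih.2, ?_⟩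
      have h1 : (setN G)^[n+1+1] (setN G (thinClass G a)) =
          (setN G)^[n] ((setN G)^[2] (setN G (thinClass G a))) := by
        rw [← Function.iterate_add_apply]
      have h2 : (setN G)^[2] (setN G (thinClass G a)) ⊆ setN G (thinClass G a) := by
        rw [h2set]
        exact hN2 a
      rw [h1]
      exact (iter_mono G n h2).trans ih.1
  apply Set.Subset.antisymm
  · refine Set.iUnion_subset fun n => ?_
    rw [Function.iterate_succ_apply]
    exact (key n).1
  · apply Set.union_subset
    · intro z hz
      refine Set.mem_iUnion.mpr ⟨0, ?_⟩
      rw [Function.iterate_succ_apply', Function.iterate_zero_apply]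
      exact hz
    · intro z hz
      refine Set.mem_iUnion.mpr ⟨1, ?_⟩
      rw [Function.iterate_succ_apply', Function.iterate_one]
      exact hz

lemma mem_reach_one {x z : L} (h : G x z) : z ∈ reachSet G (thinClass G x) := by
  refine Set.mem_iUnion.mpr ⟨0, ?_⟩
  rw [Function.iterate_succ_apply', Function.iterate_zero_apply]
  exact ⟨x, mem_thin_self G x, h⟩

lemma mem_reach_two {x y z : L} (hxy : G x y) (hyz : G y z) :
    z ∈ reachSet G (thinClass G x) := by
  refine Set.mem_iUnion.mpr ⟨1, ?_⟩
  rw [Function.iterate_succ_apply', Function.iterate_one]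
  exact ⟨y, ⟨x, mem_thin_self G x, hxy⟩, hyz⟩

lemma reach_has_in {a x : L} (hx : x ∈ reachSet G (thinClass G a)) :
    ∃ y, G y x := by
  obtain ⟨n, hn⟩ := Set.mem_iUnion.mp hx
  rw [Function.iterate_succ_apply'] at hn
  obtain ⟨z, -, hzx⟩ := hn
  exact ⟨z, hzx⟩

lemma arc_sub
    (hN2 : ∀ a : L, setN G (setN G (setN G (thinClass G a))) ⊆ setN G (thinClass G a))
    {a b : L} (h : G b a) :
    reachSet G (thinClass G a) ⊆ reachSet G (thinClass G b) := by
  rw [reach_eq G hN2, reach_eq G hN2]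
  have h1 : setN G (thinClass G a) ⊆ setN G (setN G (thinClass G b)) := by
    rw [setN_thin G a]
    intro z hz
    refine ⟨a, ?_, hz⟩
    rw [setN_thin G b]
    exact h
  have h2 : setN G (setN G (thinClass G a)) ⊆ setN G (thinClass G b) :=
    (setN_mono G h1).trans (hN2 b)
  exact Set.union_subset (h1.trans Set.subset_union_right)
    (h2.trans Set.subset_union_left)

lemma sq_sub
    (hN2 : ∀ a : L, setN G (setN G (setN G (thinClass G a))) ⊆ setN G (thinClass G a))
    {a b : L} (h : a ∈ setN G (setN G (thinClass G b))) :
    reachSet G (thinClass G a) ⊆ reachSet G (thinClass G b) := by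
  obtain ⟨y, hy, hya⟩ := h
  rw [setN_thin G b] at hy
  exact (arc_sub G hN2 hya).trans (arc_sub G hN2 hy)

lemma lemC
    (hN2 : ∀ a : L, setN G (setN G (setN G (thinClass G a))) ⊆ setN G (thinClass G a))
    (hN3 : ∀ a b : L,
      thinClass G a ∩ setN G (setN G (thinClass G b)) = ∅ →
      thinClass G b ∩ setN G (setN G (thinClass G a)) = ∅ →
      (setN G (thinClass G a) ∩ setN G (thinClass G b)).Nonempty →
      setNin G (thinClass G a) = setNin G (thinClass G b) ∧
      (setN G (thinClass G a) ⊆ setN G (thinClass G b) ∨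
       setN G (thinClass G b) ⊆ setN G (thinClass G a)))
    {a b : L} (hx : (setN G (thinClass G a) ∩ setN G (thinClass G b)).Nonempty) :
    reachSet G (thinClass G a) ⊆ reachSet G (thinClass G b) ∨
    reachSet G (thinClass G b) ⊆ reachSet G (thinClass G a) := by
  by_cases ha : a ∈ setN G (setN G (thinClass G b))
  · exact Or.inl (sq_sub G hN2 ha)
  by_cases hb : b ∈ setN G (setN G (thinClass G a))
  · exact Or.inr (sq_sub G hN2 hb)
  obtain ⟨-, hc | hc⟩ := hN3 a b (thin_inter_empty G a _ ha) (thin_inter_empty G b _ hb) hx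
  · left
    rw [reach_eq G hN2, reach_eq G hN2]
    exact Set.union_subset (hc.trans Set.subset_union_left)
      ((setN_mono G hc).trans Set.subset_union_right)
  · right
    rw [reach_eq G hN2, reach_eq G hN2]
    exact Set.union_subset (hc.trans Set.subset_union_left)
      ((setN_mono G hc).trans Set.subset_union_right)

lemma mixed
    (hN2 : ∀ a : L, setN G (setN G (setN G (thinClass G a))) ⊆ setN G (thinClass G a))
    (hN1 : ∀ a b : L,
      thinClass G a ∩ setN G (thinClass G b) = ∅ →
      thinClass G b ∩ setN G (thinClass G a) = ∅ →
      setN G (thinClass G a) ∩ setN G (setN G (thinClass G b)) = ∅ ∧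
      setN G (thinClass G b) ∩ setN G (setN G (thinClass G a)) = ∅)
    {a b : L}
    (h : (setN G (thinClass G a) ∩ setN G (setN G (thinClass G b))).Nonempty) :
    reachSet G (thinClass G a) ⊆ reachSet G (thinClass G b) ∨
    reachSet G (thinClass G b) ⊆ reachSet G (thinClass G a) := by
  by_cases hba : G b a
  · exact Or.inl (arc_sub G hN2 hba)
  by_cases hab : G a b
  · exact Or.inr (arc_sub G hN2 hab)
  exfalso
  have h1 : thinClass G a ∩ setN G (thinClass G b) = ∅ := by
    apply thin_inter_empty
    rw [setN_thin G b]
    exact hba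
  have h2 : thinClass G b ∩ setN G (thinClass G a) = ∅ := by
    apply thin_inter_empty
    rw [setN_thin G a]
    exact hab
  obtain ⟨he, -⟩ := hN1 a b h1 h2
  exact (Set.nonempty_iff_ne_empty.mp h) he

lemma nested
    (hN2 : ∀ a : L, setN G (setN G (setN G (thinClass G a))) ⊆ setN G (thinClass G a))
    (hN3 : ∀ a b : L,
      thinClass G a ∩ setN G (setN G (thinClass G b)) = ∅ →
      thinClass G b ∩ setN G (setN G (thinClass G a)) = ∅ →
      (setN G (thinClass G a) ∩ setN G (thinClass G b)).Nonempty →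
      setNin G (thinClass G a) = setNin G (thinClass G b) ∧
      (setN G (thinClass G a) ⊆ setN G (thinClass G b) ∨
       setN G (thinClass G b) ⊆ setN G (thinClass G a)))
    (hN1 : ∀ a b : L,
      thinClass G a ∩ setN G (thinClass G b) = ∅ →
      thinClass G b ∩ setN G (thinClass G a) = ∅ →
      setN G (thinClass G a) ∩ setN G (setN G (thinClass G b)) = ∅ ∧
      setN G (thinClass G b) ∩ setN G (setN G (thinClass G a)) = ∅)
    {a b : L}
    (h : (reachSet G (thinClass G a) ∩ reachSet G (thinClass G b)).Nonempty) :
    reachSet G (thinClass G a) ⊆ reachSet G (thinClass G b) ∨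
    reachSet G (thinClass G b) ⊆ reachSet G (thinClass G a) := by
  obtain ⟨x, hxa, hxb⟩ := h
  rw [reach_eq G hN2 a, Set.mem_union] at hxa
  rw [reach_eq G hN2 b, Set.mem_union] at hxb
  rcases hxa with hxa | hxa <;> rcases hxb with hxb | hxb
  · exact lemC G hN2 hN3 ⟨x, hxa, hxb⟩
  · exact mixed G hN2 hN1 ⟨x, hxa, hxb⟩
  · exact (mixed G hN2 hN1 ⟨x, hxb, hxa⟩).symm
  · obtain ⟨u, hu, hux⟩ := hxa
    obtain ⟨v, hv, hvx⟩ := hxb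
    by_cases huv : u ∈ setN G (setN G (thinClass G v))
    · have hNv : setN G (thinClass G v) ⊆ setN G (setN G (thinClass G b)) := by
        rw [setN_thin G v]
        intro z hz
        exact ⟨v, hv, hz⟩
      have hub : u ∈ setN G (thinClass G b) := hN2 b ((setN_mono G hNv) huv)
      exact lemC G hN2 hN3 ⟨u, hu, hub⟩
    by_cases hvu : v ∈ setN G (setN G (thinClass G u))
    · have hNu : setN G (thinClass G u) ⊆ setN G (setN G (thinClass G a)) := by
        rw [setN_thin G u]
        intro z hz
        exact ⟨u, hu, hz⟩
      have hva : v ∈ setN G (thinClass G a) := hN2 a ((setN_mono G hNu) hvu)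
      exact lemC G hN2 hN3 ⟨v, hva, hv⟩
    obtain ⟨hin, -⟩ := hN3 u v (thin_inter_empty G u _ huv) (thin_inter_empty G v _ hvu)
      ⟨x, by rw [setN_thin G u]; exact hux, by rw [setN_thin G v]; exact hvx⟩
    have hau : a ∈ setNin G (thinClass G u) := by
      rw [setNin_thin G u]
      rw [setN_thin G a] at hu
      exact hu
    rw [hin, setNin_thin G v] at hau
    refine lemC G hN2 hN3 ⟨v, ?_, hv⟩
    rw [setN_thin G a]
    exact hau

lemma adj_inter (hout : ∀ x : L, ∃ y : L, G x y) {x y : L} (h : G x y ∨ G y x) :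
    (reachSet G (thinClass G x) ∩ reachSet G (thinClass G y)).Nonempty := by
  rcases h with h | h
  · obtain ⟨z, hz⟩ := hout y
    exact ⟨z, mem_reach_two G h hz, mem_reach_one G hz⟩
  · obtain ⟨z, hz⟩ := hout x
    exact ⟨z, mem_reach_one G hz, mem_reach_two G h hz⟩

end BMGaux


theorem stmt15 {L S : Type} [Fintype L] (G : L → L → Prop) (σ : L → S)
    (s t : S) (hst : s ≠ t) (hS : ∀ u : S, u = s ∨ u = t)
    (hsurj : Function.Surjective σ)
    (harc : ∀ x y : L, G x y → σ x ≠ σ y)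
    (hout : ∀ x : L, ∃ y : L, G x y)
    (hconn : (relGraph G).Connected)
    (hN1 : ∀ a b : L,
      thinClass G a ∩ setN G (thinClass G b) = ∅ →
      thinClass G b ∩ setN G (thinClass G a) = ∅ →
      setN G (thinClass G a) ∩ setN G (setN G (thinClass G b)) = ∅ ∧
      setN G (thinClass G b) ∩ setN G (setN G (thinClass G a)) = ∅)
    (hN2 : ∀ a : L, setN G (setN G (setN G (thinClass G a))) ⊆ setN G (thinClass G a))
    (hN3 : ∀ a b : L,
      thinClass G a ∩ setN G (setN G (thinClass G b)) = ∅ →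
      thinClass G b ∩ setN G (setN G (thinClass G a)) = ∅ →
      (setN G (thinClass G a) ∩ setN G (thinClass G b)).Nonempty →
      setNin G (thinClass G a) = setNin G (thinClass G b) ∧
      (setN G (thinClass G a) ⊆ setN G (thinClass G b) ∨
       setN G (thinClass G b) ⊆ setN G (thinClass G a))) :
    (∀ a : L, reachSet G (thinClass G a) ⊆ {x : L | ∀ y : L, ¬ G y x}ᶜ) ∧
    (∀ a b : L, reachSet G (thinClass G a) ⊆ reachSet G (thinClass G b) ∨
      reachSet G (thinClass G b) ⊆ reachSet G (thinClass G a) ∨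
      reachSet G (thinClass G a) ∩ reachSet G (thinClass G b) = ∅) ∧
    (∃ a : L, reachSet G (thinClass G a) = {x : L | ∀ y : L, ¬ G y x}ᶜ) := by
  have nested : ∀ a b : L, (reachSet G (thinClass G a) ∩ reachSet G (thinClass G b)).Nonempty →
      reachSet G (thinClass G a) ⊆ reachSet G (thinClass G b) ∨
      reachSet G (thinClass G b) ⊆ reachSet G (thinClass G a) :=
    fun a b h => BMGaux.nested G hN2 hN3 hN1 h
  refine ⟨?_, ?_, ?_⟩
  · intro a x hx
    simp only [Set.mem_compl_iff, Set.mem_setOf_eq, not_forall, not_not]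
    exact BMGaux.reach_has_in G hx
  · intro a b
    rcases Set.eq_empty_or_nonempty
        (reachSet G (thinClass G a) ∩ reachSet G (thinClass G b)) with h | h
    · exact Or.inr (Or.inr h)
    · rcases nested a b h with h | h
      · exact Or.inl h
      · exact Or.inr (Or.inl h)
  · have : Nonempty L := hconn.nonempty
    obtain ⟨a, ha⟩ := Finite.exists_max (fun c : L => (reachSet G (thinClass G c)).ncard)
    refine ⟨a, ?_⟩
    have step : ∀ x y : L, (G x y ∨ G y x) →
        reachSet G (thinClass G x) ⊆ reachSet G (thinClass G a) →
        reachSet G (thinClass G y) ⊆ reachSet G (thinClass G a) := by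
      intro x y hxy hxa
      have hne := BMGaux.adj_inter G hout hxy
      rcases nested x y hne with h | h
      · obtain ⟨z, hz⟩ := hout x
        have hzx := BMGaux.mem_reach_one G hz
        have h2 : (reachSet G (thinClass G a) ∩ reachSet G (thinClass G y)).Nonempty :=
          ⟨z, hxa hzx, h hzx⟩
        rcases nested a y h2 with h3 | h3
        · have heq := Set.eq_of_subset_of_ncard_le h3 (ha y) (Set.toFinite _)
          exact heq.symm.subset
        · exact h3
      · exact h.trans hxa
    have aux : ∀ x y : L, (relGraph G).Walk x y →
        reachSet G (thinClass G x) ⊆ reachSet G (thinClass G a) →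
        reachSet G (thinClass G y) ⊆ reachSet G (thinClass G a) := by
      intro x y w
      induction w with
      | nil => exact id
      | @cons u v w h p ih => exact fun hu => ih (step u v (show u ≠ v ∧ (G u v ∨ G v u) from h).2 hu)
    have all : ∀ b : L, reachSet G (thinClass G b) ⊆ reachSet G (thinClass G a) := by
      intro b
      obtain ⟨w⟩ := hconn.preconnected a b
      exact aux a b w subset_rfl
    ext x
    simp only [Set.mem_compl_iff, Set.mem_setOf_eq, not_forall, not_not]
    constructor
    · exact fun hx => BMGaux.reach_has_in G hx
    · rintro ⟨y, hy⟩
      exact all y (BMGaux.mem_reach_one G hy)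
end

section
/- Let (G,σ) be a connected 2-colored best match graph and let ab|c be an informative triple, i.e., the subgraph induced by the three distinct vertices a,b,c has either (X1) arcs a→b and b→a only, with σ(a)≠σ(b); or (X2) arcs a→b, b→a, and c→a with σ(a)≠σ(b)=σ(c); or one of the analogous configurations X3, X4 with a→b present and a→c absent and σ(b)=σ(c). Then every tree T explaining (G,σ) displays the rooted triple ab|c, i.e., lca_T(a,b) ≺ lca_T(a,b,c). -/
lemma bm_key_s18 {V L S : Type} [SemilatticeSup V] (ι : L → V) (σ : L → S)
    (x y c : L) (hxy : bmArc ι σ x y) (hxc : ¬ bmArc ι σ x c)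
    (hcy : σ c = σ y) (hle : ι c ≤ ι x ⊔ ι y) : False := by
  have h1 : ι x ⊔ ι c ≤ ι x ⊔ ι y := sup_le le_sup_left hle
  have h2 : ι x ⊔ ι y ≤ ι x ⊔ ι c := hxy.2 c hcy
  have heq : ι x ⊔ ι c = ι x ⊔ ι y := le_antisymm h1 h2
  exact hxc ⟨fun h => hxy.1 (h.trans hcy), fun y' hy' =>
    heq ▸ hxy.2 y' (hy'.trans hcy)⟩

theorem stmt18 {V L S : Type} [SemilatticeSup V] [Fintype L] (ι : L → V) (σ : L → S)
    (hchain : ∀ v a b : V, v ≤ a → v ≤ b → a ≤ b ∨ b ≤ a)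
    (s t : S) (hst : s ≠ t) (hS : ∀ u : S, u = s ∨ u = t)
    (hsurj : Function.Surjective σ)
    (hconn : (bmGraph ι σ).Connected)
    (a b c : L) (hab : a ≠ b) (hac : a ≠ c) (hbc : b ≠ c)
    (hX :
      -- X1: only the arcs a → b and b → a (color of c does not matter)
      (bmArc ι σ a b ∧ bmArc ι σ b a ∧ ¬ bmArc ι σ a c ∧ ¬ bmArc ι σ c a ∧
        ¬ bmArc ι σ b c ∧ ¬ bmArc ι σ c b) ∨
      -- X2: arcs a → b, b → a and c → a, with σ(b) = σ(c)
      (bmArc ι σ a b ∧ bmArc ι σ b a ∧ bmArc ι σ c a ∧ ¬ bmArc ι σ a c ∧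
        ¬ bmArc ι σ b c ∧ ¬ bmArc ι σ c b ∧ σ b = σ c) ∨
      -- X3: only the arc a → b, with σ(b) = σ(c)
      (bmArc ι σ a b ∧ ¬ bmArc ι σ b a ∧ ¬ bmArc ι σ a c ∧ ¬ bmArc ι σ c a ∧
        ¬ bmArc ι σ b c ∧ ¬ bmArc ι σ c b ∧ σ b = σ c) ∨
      -- X4: arcs a → b and c → a, with σ(b) = σ(c)
      (bmArc ι σ a b ∧ ¬ bmArc ι σ b a ∧ bmArc ι σ c a ∧ ¬ bmArc ι σ a c ∧
        ¬ bmArc ι σ b c ∧ ¬ bmArc ι σ c b ∧ σ b = σ c)) :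
    ι a ⊔ ι b < ι a ⊔ ι b ⊔ ι c := by
  rw [left_lt_sup]
  intro hc
  rcases hX with ⟨h1, h2, hac', _, hbc', _⟩ | ⟨h1, _, _, hac', _, _, hbc2⟩ |
    ⟨h1, _, hac', _, _, _, hbc2⟩ | ⟨h1, _, _, hac', _, _, hbc2⟩
  · -- X1 : σ c = σ a or σ c = σ b
    have hca : ι c ≤ ι b ⊔ ι a := by rwa [sup_comm (ι b) (ι a)]
    rcases hS (σ c) with hcs | hcs <;> rcases hS (σ a) with has | has <;>
      rcases hS (σ b) with hbs | hbs
    · exact absurd (has.trans hbs.symm) h1.1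
    · exact bm_key_s18 ι σ b a c h2 hbc' (hcs.trans has.symm) hca
    · exact bm_key_s18 ι σ a b c h1 hac' (hcs.trans hbs.symm) hc
    · exact absurd (has.trans hbs.symm) h1.1
    · exact absurd (has.trans hbs.symm) h1.1
    · exact bm_key_s18 ι σ a b c h1 hac' (hcs.trans hbs.symm) hc
    · exact bm_key_s18 ι σ b a c h2 hbc' (hcs.trans has.symm) hca
    · exact absurd (has.trans hbs.symm) h1.1
  · exact bm_key_s18 ι σ a b c h1 hac' hbc2.symm hc
  · exact bm_key_s18 ι σ a b c h1 hac' hbc2.symm hc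
  · exact bm_key_s18 ι σ a b c h1 hac' hbc2.symm hc
end

section
/- Let (G,σ) be a best match graph explained by (T,σ), α a thinness class of (G,σ), and s a color different from σ(α). Define ρ_{α,s} = max_{x∈α, y∈N_s(α)} lca(x,y), where N_s(α) is the set of out-neighbors of α with color s. Then N_s(α) = L(T(ρ_{α,s})) ∩ L[s], i.e., the out-neighbors of α with color s are exactly the leaves of color s below ρ_{α,s}. -/
theorem stmt19 {V L S : Type} [SemilatticeSup V] [Fintype L] (ι : L → V) (σ : L → S)
    (hchain : ∀ v a b : V, v ≤ a → v ≤ b → a ≤ b ∨ b ≤ a)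
    (a : L) (s : S) (hs : s ≠ σ a) (ρ : V)
    (hub : ∀ x ∈ thinClass (bmArc ι σ) a, ∀ y : L, bmArc ι σ x y → σ y = s →
      ι x ⊔ ι y ≤ ρ)
    (hach : ∃ x ∈ thinClass (bmArc ι σ) a, ∃ y : L, bmArc ι σ x y ∧ σ y = s ∧
      ι x ⊔ ι y = ρ) :
    {y : L | σ y = s ∧ ∃ x ∈ thinClass (bmArc ι σ) a, bmArc ι σ x y} =
      {y : L | ι y ≤ ρ ∧ σ y = s} := by
  obtain ⟨x₀, hx₀, y₀, harc₀, hcol₀, hsup₀⟩ := hach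
  ext y
  simp only [Set.mem_setOf_eq]
  constructor
  · rintro ⟨hys, x, hx, harc⟩
    exact ⟨le_trans le_sup_right (hub x hx y harc hys), hys⟩
  · rintro ⟨hyρ, hys⟩
    refine ⟨hys, x₀, hx₀, ?_, ?_⟩
    · rw [hys, ← hcol₀]; exact harc₀.1
    · intro y' hy'
      have h1 : ι x₀ ⊔ ι y ≤ ρ := by
        rw [← hsup₀]
        exact sup_le (le_sup_left) (hyρ.trans (le_of_eq hsup₀.symm))
      have h2 : ρ ≤ ι x₀ ⊔ ι y' := by
        rw [← hsup₀]
        exact harc₀.2 y' (hy'.trans (hys.trans hcol₀.symm))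
      exact h1.trans h2
end
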